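/- (Theorem 1, part (b).) Fix an integer n ≥ 1, σ > 0, α, τ ∈ (0,1) satisfying (C1) τ ≥ α and (C2) τ < 2Φ(−z_{α/2}/2) − α, and λ > 0 with z_{α/2}σ/√n < √λ < (z_{α/2} + z_{τ/2})σ/√n. Let c_1 > 0 be a solution of θ = √λ − z_{α/2}σ̃(θ)/√n and set ν_0 = √λ. Then for every θ ∈ [c_1, ν_0], the difference Δ(θ) = CR(θ) − CR_1(θ) satisfies Δ(θ) ≥ 2/(1 + α) − 2Φ(z_{α/2}/2), and this lower bound is strictly positive. -/

import Mathlib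

open MeasureTheory ProbabilityTheory

/-- The standard normal cumulative distribution function. -/
noncomputable def Phi (x : ℝ) : ℝ := (gaussianReal 0 1 (Set.Iic x)).toReal

/-- P_s(θ,ν) = Φ(√n(θ − ν)/σ) + Φ(√n(−θ − ν)/σ). -/
noncomputable def Ps (n : ℕ) (σ θ ν : ℝ) : ℝ :=
  Phi (Real.sqrt n * (θ - ν) / σ) + Phi (Real.sqrt n * (-θ - ν) / σ)

/-- σ̃(θ) = (1 + λ/θ²)⁻¹ σ for θ ≠ 0, with the convention σ̃(0) = 0. -/
noncomputable def sigTilde (lam σ θ : ℝ) : ℝ :=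
  if θ = 0 then 0 else (1 + lam / θ ^ 2)⁻¹ * σ

open Classical in
/-- The piecewise function CR_a(θ,ν); here `za` denotes the quantile z_{α/2}. -/
noncomputable def CRa (n : ℕ) (σ lam za θ ν : ℝ) : ℝ :=
  if θ < |ν - za * sigTilde lam σ θ / Real.sqrt n| then
    (Ps n σ θ ν - 2 * Phi (-(za * sigTilde lam σ θ / σ))) *
      (if ν < za * sigTilde lam σ θ / Real.sqrt n then 1 else 0)
  else if θ ≤ ν + za * sigTilde lam σ θ / Real.sqrt n then
    Phi (za * sigTilde lam σ θ / σ) - Phi (Real.sqrt n * (ν - θ) / σ)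
  else 1 - 2 * Phi (-(za * sigTilde lam σ θ / σ))

open Classical in
/-- The piecewise function CR_b(θ,ν); here `za` denotes the quantile z_{α/2}. -/
noncomputable def CRb (n : ℕ) (σ α za θ ν : ℝ) : ℝ :=
  if θ < |ν - za * σ / Real.sqrt n| then
    (Ps n σ θ ν - α) * (if ν < za * σ / Real.sqrt n then 1 else 0)
  else if θ ≤ ν + za * σ / Real.sqrt n then
    1 - α / 2 - Phi (Real.sqrt n * (ν - θ) / σ)
  else 1 - α

/-- CR₁(θ) = CR_a(θ, ν₀)/P_s(θ, ν₀) with ν₀ = √λ: the conditional coverage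
probability of the asymptotic-based confidence interval. -/
noncomputable def CR1 (n : ℕ) (σ lam za θ : ℝ) : ℝ :=
  CRa n σ lam za θ (Real.sqrt lam) / Ps n σ θ (Real.sqrt lam)

/-- CR(θ) = (CR_b(θ,ν₁) + CR_a(θ,ν₂) − CR_b(θ,ν₂))/P_s(θ,ν₁) with
ν₁ = z_{τ/2}σ/√n and ν₂ = √λ + z_{α/2}σ/√n: the conditional coverage probability
of the two-step confidence interval. Here `za` = z_{α/2} and `zt` = z_{τ/2}. -/
noncomputable def CRtwo (n : ℕ) (σ lam α za zt θ : ℝ) : ℝ :=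
  (CRb n σ α za θ (zt * σ / Real.sqrt n)
    + CRa n σ lam za θ (Real.sqrt lam + za * σ / Real.sqrt n)
    - CRb n σ α za θ (Real.sqrt lam + za * σ / Real.sqrt n))
  / Ps n σ θ (zt * σ / Real.sqrt n)

/-- Δ(θ) = CR(θ) − CR₁(θ). -/
noncomputable def Delta (n : ℕ) (σ lam α za zt θ : ℝ) : ℝ :=
  CRtwo n σ lam α za zt θ - CR1 n σ lam za θ

/-!
On `[c₁, √λ]` every piece of `Δ` can be evaluated: both terms at `ν₂` vanish, `CR_b(θ, ν₁)` and
`CR_a(θ, ν₀)` lie on their middle branches, and `σ̃(θ) ≤ σ/2` because `θ² ≤ λ`. With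
`q = Φ(√n(θ - √λ)/σ)` and `β = Φ(-z_{α/2}/2)` this gives `β ≤ q ≤ 1/2` and
`Δ(θ) ≥ β/q - (α/2 + B)/(q + B)` for some `0 ≤ B ≤ α/2`, and the right-hand side is at least
`2/(1 + α) - 2(1 - β)` by elementary algebra. Conditions (C1) and (C2) give `α < β`, which makes
this bound positive.
-/

open Real

lemma Phi_eq_integral (x : ℝ) : Phi x = ∫ t in Set.Iic x, gaussianPDFReal 0 1 t := by
  rw [Phi, gaussianReal_apply_eq_integral 0 one_ne_zero, ENNReal.toReal_ofReal]
  exact integral_nonneg fun t => gaussianPDFReal_nonneg 0 1 t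

lemma Phi_strictMono : StrictMono Phi := by
  intro a b hab
  have hint (c : ℝ) : IntegrableOn (gaussianPDFReal 0 1) (Set.Iic c) :=
    (integrable_gaussianPDFReal 0 1).integrableOn
  have hdiff : Phi b - Phi a = ∫ t in a..b, gaussianPDFReal 0 1 t := by
    rw [Phi_eq_integral, Phi_eq_integral]
    exact intervalIntegral.integral_Iic_sub_Iic (hint a) (hint b)
  have hpos : 0 < ∫ t in a..b, gaussianPDFReal 0 1 t :=
    intervalIntegral.intervalIntegral_pos_of_pos_on
      (integrable_gaussianPDFReal 0 1).intervalIntegrable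
      (fun x _ => gaussianPDFReal_pos 0 1 x one_ne_zero) hab
  linarith

lemma Phi_mono : Monotone Phi := Phi_strictMono.monotone

lemma Phi_neg (x : ℝ) : Phi (-x) = 1 - Phi x := by
  have hright : Phi (-x) = ∫ t in Set.Ioi x, gaussianPDFReal 0 1 t := by
    rw [Phi_eq_integral, ← neg_neg x, ← integral_comp_neg_Iic, neg_neg]
    simp [gaussianPDFReal]
  rw [hright, eq_sub_iff_add_eq, Phi_eq_integral, add_comm,
    intervalIntegral.integral_Iic_add_Ioi (integrable_gaussianPDFReal 0 1).integrableOn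
      (integrable_gaussianPDFReal 0 1).integrableOn]
  exact integral_gaussianPDFReal_eq_one 0 one_ne_zero

lemma Phi_zero : Phi 0 = 1 / 2 := by
  linarith [neg_zero (G := ℝ) ▸ Phi_neg 0]

lemma Phi_pos (x : ℝ) : 0 < Phi x :=
  ENNReal.toReal_nonneg.trans_lt (Phi_strictMono (sub_one_lt x))

section sigTilde

variable {lam σ : ℝ}

lemma sigTilde_nonneg (hlam : 0 ≤ lam) (hσ : 0 ≤ σ) (t : ℝ) : 0 ≤ sigTilde lam σ t := by
  unfold sigTilde
  split_ifs <;> positivity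

lemma sigTilde_le_half (hσ : 0 ≤ σ) {t : ℝ} (ht : t ≠ 0) (htlam : t ^ 2 ≤ lam) :
    sigTilde lam σ t ≤ σ / 2 := by
  have h : 2 ≤ 1 + lam / t ^ 2 := by
    linarith [(one_le_div (by positivity)).2 htlam]
  rw [sigTilde, if_neg ht]
  exact (mul_le_mul_of_nonneg_right (inv_anti₀ two_pos h) hσ).trans_eq (inv_mul_eq_div 2 σ)

lemma sigTilde_monotoneOn (hlam : 0 ≤ lam) (hσ : 0 ≤ σ) :
    MonotoneOn (sigTilde lam σ) (Set.Ioi 0) := by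
  intro s (hs : 0 < s) t (ht : 0 < t) hst
  rw [sigTilde, sigTilde, if_neg hs.ne', if_neg ht.ne']
  gcongr

end sigTilde

section Branches

variable {n : ℕ} {σ lam α za θ ν : ℝ}

lemma CRa_eq_of_abs_sub_le_of_le (h₁ : |ν - za * sigTilde lam σ θ / √n| ≤ θ)
    (h₂ : θ ≤ ν + za * sigTilde lam σ θ / √n) :
    CRa n σ lam za θ ν = Phi (za * sigTilde lam σ θ / σ) - Phi (√n * (ν - θ) / σ) := by
  rw [CRa, if_neg h₁.not_gt, if_pos h₂]

lemma CRa_eq_zero (h₁ : θ < |ν - za * sigTilde lam σ θ / √n|)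
    (h₂ : za * sigTilde lam σ θ / √n ≤ ν) : CRa n σ lam za θ ν = 0 := by
  rw [CRa, if_pos h₁, if_neg h₂.not_gt, mul_zero]

lemma CRb_eq_of_abs_sub_le_of_le (h₁ : |ν - za * σ / √n| ≤ θ) (h₂ : θ ≤ ν + za * σ / √n) :
    CRb n σ α za θ ν = 1 - α / 2 - Phi (√n * (ν - θ) / σ) := by
  rw [CRb, if_neg h₁.not_gt, if_pos h₂]

lemma CRb_eq_zero (h₁ : θ < |ν - za * σ / √n|) (h₂ : za * σ / √n ≤ ν) :
    CRb n σ α za θ ν = 0 := by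
  rw [CRb, if_pos h₁, if_neg h₂.not_gt, mul_zero]

lemma CRa_add_eq_zero {μ : ℝ} (hμ : 0 ≤ μ) (hθ : θ ≤ μ)
    (hd : za * sigTilde lam σ θ / √n < za * σ / √n) :
    CRa n σ lam za θ (μ + za * σ / √n) = 0 :=
  CRa_eq_zero ((hθ.trans_lt (by linarith)).trans_le (le_abs_self _)) (by linarith)

lemma CRb_add_eq_zero {μ : ℝ} (hn : n ≠ 0) (hσ : 0 < σ) (hza0 : 0 ≤ za)
    (hza : Phi (-za) = α / 2) (hμ : 0 ≤ μ) (hθ : θ ≤ μ) :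
    CRb n σ α za θ (μ + za * σ / √n) = 0 := by
  have hD : 0 ≤ za * σ / √n := by positivity
  have habs : |μ + za * σ / √n - za * σ / √n| = μ := by
    rw [add_sub_cancel_right, abs_of_nonneg hμ]
  rcases hθ.lt_or_eq with hlt | rfl
  · exact CRb_eq_zero (by rwa [habs]) (by linarith)
  · have hsqn : √(n : ℝ) ≠ 0 := by positivity
    have hz : √n * (θ + za * σ / √n - θ) / σ = za := by field_simp; ring
    rw [CRb_eq_of_abs_sub_le_of_le habs.le (by linarith), hz, ← hza, Phi_neg]
    ring

end Branches

lemma two_div_one_add_sub_le_div_sub_div {α β q B : ℝ} (hα0 : 0 < α) (hα1 : α < 1)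
    (hαβ : α < β) (hβq : β ≤ q) (hq : q ≤ 1 / 2) (hB0 : 0 ≤ B) (hB : B ≤ α / 2) :
    2 / (1 + α) - 2 * (1 - β) ≤ β / q - (α / 2 + B) / (q + B) := by
  have hβ0 : 0 < β := hα0.trans hαβ
  have hq0 : 0 < q := hβ0.trans_le hβq
  have hqB : 0 < q + B := by linarith
  have h1α : (0 : ℝ) < 1 + α := by linarith
  rw [← sub_nonneg]
  have key : β / q - (α / 2 + B) / (q + B) - (2 / (1 + α) - 2 * (1 - β)) =
      (β * (q + B) * (1 + α) - (α / 2 + B) * q * (1 + α)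
        - (2 - 2 * (1 - β) * (1 + α)) * (q * (q + B))) / (q * (q + B) * (1 + α)) := by
    field_simp
  rw [key]
  apply div_nonneg _ (by positivity)
  have h2 : (0 : ℝ) ≤ 1 / 2 - q := by linarith
  have h3 : 0 ≤ 2 * β * (q + B) * (1 / 2 + B) - (α / 2 + B) * q := by
    nlinarith [mul_nonneg hβ0.le (mul_nonneg hq0.le hB0), mul_nonneg hβ0.le hB0,
      mul_nonneg hβ0.le (mul_nonneg hB0 hB0),
      mul_nonneg hq0.le (by linarith : (0 : ℝ) ≤ β - α / 2 - B)]
  have h4 : (0 : ℝ) ≤ (1 - α) * (α / 2 - B) := mul_nonneg (sub_nonneg.2 hα1.le) (by linarith)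
  nlinarith [mul_nonneg (mul_nonneg h2 h1α.le) h3, mul_nonneg (mul_nonneg hq0.le hqB.le) h4]

lemma two_div_one_add_sub_le_ratio_sub_ratio {α β q B U R T : ℝ} (hα0 : 0 < α)
    (hα1 : α < 1) (hαβ : α < β) (hβq : β ≤ q) (hq : q ≤ 1 / 2) (hB0 : 0 ≤ B)
    (hB : B ≤ α / 2) (hqU : q ≤ U) (hR : R ≤ 1 - β) (hT : 0 < T) :
    2 / (1 + α) - 2 * (1 - β) ≤ (U - α / 2) / (U + B) - (R - (1 - q)) / (q + T) := by
  have hq0 : 0 < q := (hα0.trans hαβ).trans_le hβq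
  have hfirst : 1 - (α / 2 + B) / (q + B) ≤ (U - α / 2) / (U + B) := by
    have h : (α / 2 + B) / (U + B) ≤ (α / 2 + B) / (q + B) := by gcongr
    have hUB : 0 < U + B := by linarith
    calc 1 - (α / 2 + B) / (q + B) ≤ 1 - (α / 2 + B) / (U + B) := by linarith
      _ = (U - α / 2) / (U + B) := by field_simp; ring
  have hsecond : (R - (1 - q)) / (q + T) ≤ 1 - β / q :=
    calc (R - (1 - q)) / (q + T) ≤ (q - β) / q :=
          div_le_div₀ (by linarith) (by linarith) hq0 (by linarith)
      _ = 1 - β / q := by field_simp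
  linarith [two_div_one_add_sub_le_div_sub_div hα0 hα1 hαβ hβq hq hB0 hB]

lemma two_mul_one_sub_lt_two_div_one_add {α β : ℝ} (hα0 : 0 < α) (hαβ : α < β) :
    2 * (1 - β) < 2 / (1 + α) := by
  rw [lt_div_iff₀ (by linarith)]
  nlinarith [mul_pos hα0 (hα0.trans hαβ)]

lemma two_div_one_add_sub_le_Phi_ratios {α za zt x l k T : ℝ} (hα0 : 0 < α) (hα1 : α < 1)
    (hαβ : α < Phi (-(za / 2))) (hza : Phi (-za) = α / 2) (hztza : zt ≤ za) (hzt : za / 2 < zt)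
    (hl : za < l) (hxl : x ≤ l) (hlxk : l - x ≤ k) (hk : k ≤ za / 2) (hT : 0 < T) :
    2 / (1 + α) - 2 * (1 - Phi (-(za / 2))) ≤
      (Phi (x - zt) - α / 2) / (Phi (x - zt) + Phi (-x - zt))
        - (Phi k - (1 - Phi (x - l))) / (Phi (x - l) + T) := by
  refine two_div_one_add_sub_le_ratio_sub_ratio hα0 hα1 hαβ (Phi_mono (by linarith)) ?_
    (Phi_pos _).le (hza ▸ Phi_mono (by linarith)) (Phi_mono (by linarith)) ?_ hT
  · exact Phi_zero ▸ Phi_mono (by linarith)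
  · rw [← Phi_neg (-(za / 2)), neg_neg]
    exact Phi_mono hk

section OnInterval

variable {n : ℕ} {σ lam α za zt θ : ℝ}

lemma CR1_eq (hlam : 0 ≤ lam) (hσ : 0 ≤ σ) (hza0 : 0 ≤ za) (hθ : θ ≤ √lam)
    (hd : za * sigTilde lam σ θ / √n ≤ √lam) (hθd : √lam - za * sigTilde lam σ θ / √n ≤ θ) :
    CR1 n σ lam za θ =
      (Phi (za * sigTilde lam σ θ / σ) - Phi (√n * (√lam - θ) / σ)) / Ps n σ θ √lam := by
  have hd0 : 0 ≤ za * sigTilde lam σ θ / √n := by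
    have := sigTilde_nonneg hlam hσ θ
    positivity
  rw [CR1, CRa_eq_of_abs_sub_le_of_le (by rwa [abs_of_nonneg (sub_nonneg.2 hd)])
    (by linarith)]

lemma CRtwo_eq (hn : n ≠ 0) (hσ : 0 < σ) (hza0 : 0 ≤ za) (hza : Phi (-za) = α / 2)
    (hθ : θ ≤ √lam) (hd : za * sigTilde lam σ θ / √n < za * σ / √n)
    (hν₁ : zt * σ / √n ≤ za * σ / √n) (hθν₁ : za * σ / √n - zt * σ / √n ≤ θ)
    (hlamUB : √lam ≤ zt * σ / √n + za * σ / √n) :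
    CRtwo n σ lam α za zt θ =
      (1 - α / 2 - Phi (√n * (zt * σ / √n - θ) / σ)) / Ps n σ θ (zt * σ / √n) := by
  rw [CRtwo, CRa_add_eq_zero (sqrt_nonneg lam) hθ hd,
    CRb_add_eq_zero hn hσ hza0 hza (sqrt_nonneg lam) hθ, add_zero, sub_zero,
    CRb_eq_of_abs_sub_le_of_le (by rwa [abs_sub_comm, abs_of_nonneg (sub_nonneg.2 hν₁)])
      (by linarith)]

lemma two_div_one_add_sub_le_Delta (hn : n ≠ 0) (hσ : 0 < σ) (hlam : 0 ≤ lam)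
    (hα0 : 0 < α) (hα1 : α < 1) (hαβ : α < Phi (-(za / 2))) (hza : Phi (-za) = α / 2)
    (hza0 : 0 < za) (hztza : zt ≤ za) (hzt : za / 2 < zt)
    (hlamLB : za * σ / √n < √lam) (hlamUB : √lam < (za + zt) * σ / √n)
    (hθ0 : 0 < θ) (hθ : θ ≤ √lam) (hθd : √lam - za * sigTilde lam σ θ / √n ≤ θ) :
    2 / (1 + α) - 2 * (1 - Phi (-(za / 2))) ≤ Delta n σ lam α za zt θ := by
  have hsqn : 0 < √(n : ℝ) := sqrt_pos.2 (Nat.cast_pos.2 (Nat.pos_of_ne_zero hn))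
  have hσt : za * sigTilde lam σ θ ≤ za * (σ / 2) :=
    mul_le_mul_of_nonneg_left (sigTilde_le_half hσ.le hθ0.ne'
      ((pow_le_pow_left₀ hθ0.le hθ 2).trans_eq (sq_sqrt hlam))) hza0.le
  have hd : za * sigTilde lam σ θ / √n ≤ za * σ / √n / 2 :=
    (div_le_div_of_nonneg_right hσt hsqn.le).trans_eq (by ring)
  have hD : 0 < za * σ / √n := by positivity
  have hν₁ : zt * σ / √n ≤ za * σ / √n := by gcongr
  have hν₁' : za * σ / √n / 2 < zt * σ / √n :=
    calc za * σ / √n / 2 = za / 2 * σ / √n := by ring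
      _ < zt * σ / √n := by gcongr
  have hUB : √lam < zt * σ / √n + za * σ / √n := by
    rwa [add_mul, add_div, add_comm] at hlamUB
  rw [Delta, CRtwo_eq hn hσ hza0.le hza hθ (by linarith) hν₁ (by linarith) hUB.le,
    CR1_eq hlam hσ.le hza0.le hθ (by linarith) hθd, Ps, Ps]
  have hx (c : ℝ) : √n * (θ - c * σ / √n) / σ = √n * θ / σ - c := by field_simp
  have hx' (c : ℝ) : √n * (-θ - c * σ / √n) / σ = -(√n * θ / σ) - c := by field_simp
  have hl : √n * (θ - √lam) / σ = √n * θ / σ - √n * √lam / σ := by ring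
  rw [show √n * (zt * σ / √n - θ) / σ = -(√n * (θ - zt * σ / √n) / σ) by ring,
    show √n * (√lam - θ) / σ = -(√n * (θ - √lam) / σ) by ring,
    Phi_neg (√n * (θ - zt * σ / √n) / σ), Phi_neg (√n * (θ - √lam) / σ),
    sub_sub_sub_cancel_left, hx, hx', hl]
  refine two_div_one_add_sub_le_Phi_ratios hα0 hα1 hαβ hza hztza hzt ?_ ?_ ?_ ?_ (Phi_pos _)
  · rw [lt_div_iff₀ hσ]
    linarith [(div_lt_iff₀ hsqn).1 hlamLB]
  · gcongr
  · rw [← sub_div, div_le_div_iff_of_pos_right hσ]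
    linarith [(le_div_iff₀' hsqn).1 (show √lam - θ ≤ za * sigTilde lam σ θ / √n by linarith)]
  · rw [div_le_iff₀ hσ]
    linarith

end OnInterval

theorem theorem1_part_b_general (n : ℕ) (hn : 1 ≤ n) (σ lam α τ za zt : ℝ)
    (hσ : 0 < σ) (hlam : 0 < lam)
    (hα : α ∈ Set.Ioo (0:ℝ) 1)
    (hza : Phi (-za) = α / 2) (hzt : Phi (-zt) = τ / 2)
    (hC1 : α ≤ τ) (hC2 : τ < 2 * Phi (-(za / 2)) - α)
    (hlamLB : za * σ / Real.sqrt n < Real.sqrt lam)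
    (hlamUB : Real.sqrt lam < (za + zt) * σ / Real.sqrt n)
    (c₁ : ℝ) (hc₁pos : 0 < c₁)
    (hc₁ : c₁ = Real.sqrt lam - za * sigTilde lam σ c₁ / Real.sqrt n) :
    (∀ θ ∈ Set.Icc c₁ (Real.sqrt lam),
      2 / (1 + α) - 2 * Phi (za / 2) ≤ Delta n σ lam α za zt θ) ∧
    0 < 2 / (1 + α) - 2 * Phi (za / 2) := by
  obtain ⟨hα0, hα1⟩ := hα
  have hαβ : α < Phi (-(za / 2)) := by linarith
  have hza0 : 0 < za := by
    have := Phi_strictMono.lt_iff_lt.1 (show Phi (-za) < Phi 0 by rw [hza, Phi_zero]; linarith)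
    linarith
  have hztza : zt ≤ za := by
    have := Phi_strictMono.le_iff_le.1 (show Phi (-za) ≤ Phi (-zt) by rw [hza, hzt]; linarith)
    linarith
  have hzt2 : za / 2 < zt := by
    have := Phi_strictMono.lt_iff_lt.1 (show Phi (-zt) < Phi (-(za / 2)) by rw [hzt]; linarith)
    linarith
  rw [← neg_neg (za / 2), Phi_neg (-(za / 2))]
  refine ⟨fun θ ⟨hc₁θ, hθ⟩ => ?_, sub_pos.2 (two_mul_one_sub_lt_two_div_one_add hα0 hαβ)⟩
  have hθ0 : 0 < θ := hc₁pos.trans_le hc₁θ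
  have hσc₁θ : za * sigTilde lam σ c₁ / √n ≤ za * sigTilde lam σ θ / √n :=
    div_le_div_of_nonneg_right (mul_le_mul_of_nonneg_left
      (sigTilde_monotoneOn hlam.le hσ.le hc₁pos hθ0 hc₁θ) hza0.le) (sqrt_nonneg _)
  exact two_div_one_add_sub_le_Delta (by omega) hσ hlam.le hα0 hα1 hαβ hza hza0 hztza hzt2
    hlamLB hlamUB hθ0 hθ (by linarith)

/-- Theorem 1, part (b): under (C1), (C2) and
z_{α/2}σ/√n < √λ < (z_{α/2} + z_{τ/2})σ/√n, for every θ ∈ [c₁, ν₀] (ν₀ = √λ) we have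
Δ(θ) ≥ 2/(1 + α) − 2Φ(z_{α/2}/2), and this lower bound is strictly positive. -/
theorem theorem1_part_b (n : ℕ) (hn : 1 ≤ n) (σ lam α τ za zt : ℝ)
    (hσ : 0 < σ) (hlam : 0 < lam)
    (hα : α ∈ Set.Ioo (0:ℝ) 1) (hτ : τ ∈ Set.Ioo (0:ℝ) 1)
    (hza : Phi (-za) = α / 2) (hzt : Phi (-zt) = τ / 2)
    (hC1 : α ≤ τ) (hC2 : τ < 2 * Phi (-(za / 2)) - α)
    (hlamLB : za * σ / Real.sqrt n < Real.sqrt lam)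
    (hlamUB : Real.sqrt lam < (za + zt) * σ / Real.sqrt n)
    (c₁ : ℝ) (hc₁pos : 0 < c₁)
    (hc₁ : c₁ = Real.sqrt lam - za * sigTilde lam σ c₁ / Real.sqrt n) :
    (∀ θ ∈ Set.Icc c₁ (Real.sqrt lam),
      2 / (1 + α) - 2 * Phi (za / 2) ≤ Delta n σ lam α za zt θ) ∧
    0 < 2 / (1 + α) - 2 * Phi (za / 2) :=
  theorem1_part_b_general n hn σ lam α τ za zt hσ hlam hα hza hzt hC1 hC2 hlamLB hlamUB c₁ hc₁pos
    hc₁
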